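/- Let W ∈ ℝ^{m×n} satisfy the RIP with constant δ_r, and let S, T ⊆ [n] be disjoint with |S ∪ T| ≤ r. Then for any x supported on T, ‖(W_{:,S})ᵀ W x‖₂ ≤ δ_r ‖x‖₂. -/

import Mathlib

open Finset Matrix

noncomputable def mu {m n : ℕ} (X : Matrix (Fin m) (Fin n) ℝ) : Fin m → ℝ :=
  fun i => ∑ j, X i j

noncomputable def l1 {n : ℕ} (v : Fin n → ℝ) : ℝ := ∑ i, |v i|

noncomputable def l2 {n : ℕ} (v : Fin n → ℝ) : ℝ := Real.sqrt (∑ i, (v i) ^ 2)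

noncomputable def frob {m n : ℕ} (X : Matrix (Fin m) (Fin n) ℝ) : ℝ :=
  Real.sqrt (∑ i, ∑ j, (X i j) ^ 2)

def vrestrict {n : ℕ} (v : Fin n → ℝ) (S : Finset (Fin n)) : Fin n → ℝ :=
  fun i => if i ∈ S then v i else 0

def rowSel {m n : ℕ} (X : Matrix (Fin m) (Fin n) ℝ) (S : Finset (Fin m)) :
    Matrix (Fin m) (Fin n) ℝ := Matrix.of fun i j => if i ∈ S then X i j else 0

def RIP {m n : ℕ} (W : Matrix (Fin m) (Fin n) ℝ) (r : ℕ) (δ : ℝ) : Prop :=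
  ∀ x : Fin n → ℝ, (Finset.univ.filter (fun i => x i ≠ 0)).card ≤ r →
    (1 - δ) * (∑ i, (x i) ^ 2) ≤ ∑ i, (W.mulVec x i) ^ 2 ∧
    ∑ i, (W.mulVec x i) ^ 2 ≤ (1 + δ) * ∑ i, (x i) ^ 2

def isTopK {n : ℕ} (k : ℕ) (v : Fin n → ℝ) (S : Finset (Fin n)) : Prop :=
  S.card = k ∧ ∀ i ∈ S, ∀ j ∉ S, |v j| ≤ |v i|

lemma sum_sq_eq_dotProduct_self {ι R : Type*} [Fintype ι] [Semiring R] (v : ι → R) :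
    ∑ i, v i ^ 2 = v ⬝ᵥ v := by
  simp only [dotProduct, sq]

lemma l2_sq {n : ℕ} (v : Fin n → ℝ) : l2 v ^ 2 = v ⬝ᵥ v := by
  rw [l2, Real.sq_sqrt (by positivity), sum_sq_eq_dotProduct_self]

lemma l2_nonneg {n : ℕ} (v : Fin n → ℝ) : 0 ≤ l2 v := Real.sqrt_nonneg _

lemma l2_pos {n : ℕ} {v : Fin n → ℝ} (hv : v ≠ 0) : 0 < l2 v := by
  refine (l2_nonneg v).lt_of_ne fun h => hv ?_
  rw [← dotProduct_self_eq_zero, ← l2_sq, ← h, sq, zero_mul]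

lemma vrestrict_eq_zero_of_notMem {n : ℕ} (v : Fin n → ℝ) {S : Finset (Fin n)} {i : Fin n}
    (hi : i ∉ S) : vrestrict v S i = 0 := if_neg hi

lemma vrestrict_dotProduct_vrestrict {n : ℕ} (v : Fin n → ℝ) (S : Finset (Fin n)) :
    vrestrict v S ⬝ᵥ vrestrict v S = vrestrict v S ⬝ᵥ v := by
  refine Finset.sum_congr rfl fun i _ => ?_
  by_cases hi : i ∈ S <;> simp [vrestrict, hi]

lemma dotProduct_eq_zero_of_disjoint {ι R : Type*} [Fintype ι] [Semiring R]
    {S T : Finset ι} (hdisj : Disjoint S T) {u v : ι → R} (hu : ∀ i ∉ S, u i = 0) (hv : ∀ i ∉ T, v i = 0) : u ⬝ᵥ v = 0 := by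
  refine Finset.sum_eq_zero fun i _ => ?_
  by_cases hi : i ∈ S
  · rw [hv i (Finset.disjoint_left.mp hdisj hi), mul_zero]
  · rw [hu i hi, zero_mul]

lemma card_filter_ne_zero_le {ι R : Type*} [Fintype ι] [Zero R] [DecidableEq R] {v : ι → R}
    {U : Finset ι}
    (hv : ∀ i ∉ U, v i = 0) : (univ.filter fun i => v i ≠ 0).card ≤ U.card :=
  card_le_card fun i hi => by_contra fun h => (mem_filter.mp hi).2 (hv i h)

namespace RIP

variable {m n r : ℕ} {W : Matrix (Fin m) (Fin n) ℝ} {δ : ℝ}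

lemma le_dotProduct_mulVec (h : RIP W r δ) {x : Fin n → ℝ}
    (hx : (univ.filter fun i => x i ≠ 0).card ≤ r) :
    (1 - δ) * x ⬝ᵥ x ≤ W *ᵥ x ⬝ᵥ W *ᵥ x := by
  simpa only [sum_sq_eq_dotProduct_self] using (h x hx).1

lemma dotProduct_mulVec_le (h : RIP W r δ) {x : Fin n → ℝ}
    (hx : (univ.filter fun i => x i ≠ 0).card ≤ r) :
    W *ᵥ x ⬝ᵥ W *ᵥ x ≤ (1 + δ) * x ⬝ᵥ x := by
  simpa only [sum_sq_eq_dotProduct_self] using (h x hx).2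

variable {S T : Finset (Fin n)} {u v : Fin n → ℝ}

/-- Polarization: `4 ⟪Wu, Wv⟫ = ‖W(u+v)‖² - ‖W(u-v)‖²`, and `u ± v` are `r`-sparse with
`‖u ± v‖² = ‖u‖² + ‖v‖²`. -/
lemma dotProduct_mulVec_le_half (h : RIP W r δ) (hdisj : Disjoint S T)
    (hcard : (S ∪ T).card ≤ r) (hu : ∀ i ∉ S, u i = 0) (hv : ∀ i ∉ T, v i = 0) :
    W *ᵥ u ⬝ᵥ W *ᵥ v ≤ δ / 2 * (u ⬝ᵥ u + v ⬝ᵥ v) := by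
  have hsparse : ∀ w : Fin n → ℝ, (∀ i, w i = u i + v i ∨ w i = u i - v i) →
      (univ.filter fun i => w i ≠ 0).card ≤ r := fun w hw =>
    (card_filter_ne_zero_le fun i hi => by
      rw [mem_union, not_or] at hi
      rcases hw i with hwi | hwi <;> simp [hwi, hu i hi.1, hv i hi.2]).trans hcard
  have hplus := h.dotProduct_mulVec_le (hsparse (u + v) fun _ => .inl rfl)
  have hminus := h.le_dotProduct_mulVec (hsparse (u - v) fun _ => .inr rfl)
  have horth := dotProduct_eq_zero_of_disjoint hdisj hu hv
  simp only [mulVec_add, mulVec_sub, add_dotProduct, dotProduct_add, sub_dotProduct,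
    dotProduct_sub, dotProduct_comm v u, dotProduct_comm (W *ᵥ v) (W *ᵥ u), horth] at hplus hminus
  linarith

lemma dotProduct_mulVec_le_mul_l2 (h : RIP W r δ) (hdisj : Disjoint S T)
    (hcard : (S ∪ T).card ≤ r) (hu : ∀ i ∉ S, u i = 0) (hv : ∀ i ∉ T, v i = 0) :
    W *ᵥ u ⬝ᵥ W *ᵥ v ≤ δ * l2 u * l2 v := by
  rcases eq_or_ne u 0 with rfl | hu0
  · simp [l2]
  rcases eq_or_ne v 0 with rfl | hv0
  · simp [l2]
  -- For `‖v‖ • u` and `‖u‖ • v` the bound reads `‖u‖‖v‖ ⟪Wu, Wv⟫ ≤ ‖u‖‖v‖ · δ‖u‖‖v‖`.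
  have hscaled := h.dotProduct_mulVec_le_half (u := l2 v • u) (v := l2 u • v) hdisj hcard
    (fun i hi => by simp [hu i hi]) (fun i hi => by simp [hv i hi])
  simp only [mulVec_smul, smul_dotProduct, dotProduct_smul, smul_eq_mul, ← l2_sq] at hscaled
  have huv : 0 < l2 u * l2 v := mul_pos (l2_pos hu0) (l2_pos hv0)
  nlinarith

end RIP

theorem rip_near_orthogonality {m n r : ℕ} (W : Matrix (Fin m) (Fin n) ℝ)
    (δ : ℝ) (hδ : 0 ≤ δ) (hrip : RIP W r δ)
    (S T : Finset (Fin n)) (hdisj : Disjoint S T) (hcard : (S ∪ T).card ≤ r)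
    (x : Fin n → ℝ) (hx : ∀ i, i ∉ T → x i = 0) :
    l2 (vrestrict ((Wᵀ * W).mulVec x) S) ≤ δ * l2 x := by
  set y := vrestrict ((Wᵀ * W) *ᵥ x) S
  have hy_sq : l2 y ^ 2 = W *ᵥ y ⬝ᵥ W *ᵥ x := by
    rw [l2_sq, vrestrict_dotProduct_vrestrict, dotProduct_mulVec, ← vecMul_vecMul,
      vecMul_transpose, ← dotProduct_mulVec]
  have hle : l2 y ^ 2 ≤ δ * l2 y * l2 x :=
    hy_sq ▸ hrip.dotProduct_mulVec_le_mul_l2 hdisj hcard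
      (fun i hi => vrestrict_eq_zero_of_notMem _ hi) hx
  rcases (l2_nonneg y).eq_or_lt with hy0 | hypos
  · rw [← hy0]
    exact mul_nonneg hδ (l2_nonneg x)
  · nlinarith
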